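/- For a = −1, the elephant polynomial R_n has degree n − 2 for all n ≥ 2, with leading coefficient 2^{n−2}/(n−1)!. -/

import Mathlib

/-!
Each step of the recursion has the shape `p ↦ X * p - b * (1 - X ^ 2) * p'`, which raises the
degree by at most one and multiplies the coefficient of `X ^ d` (for `deg p ≤ d`) by `1 + b * d`
when it moves it to `X ^ (d + 1)`. For `a = -1` the step from `R_n` (degree `n - 2`) to `R_{n+1}`
uses `b = -1 / n`, so the factor is `1 - (n - 2) / n = 2 / n`, which never vanishes. Starting
from `R_2 = 1`, the leading coefficients are therefore `∏_{j=2}^{n-1} 2 / j = 2 ^ (n - 2) / (n - 1)!`.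
-/

open Polynomial

/-- The elephant polynomials: `R a 1 = X` and
`R a (n+1) = X * R a n - (a/n) * (1 - X^2) * (R a n)'` for `n ≥ 1`. -/
noncomputable def elephantR (a : ℝ) : ℕ → Polynomial ℝ
  | 0 => 1
  | 1 => X
  | n + 2 => X * elephantR a (n + 1) -
      C (a / ((n : ℝ) + 1)) * ((1 - X ^ 2) * (elephantR a (n + 1)).derivative)

section ElephantStep

variable {R : Type*} [CommRing R]

noncomputable def elephantStep (b : R) (p : R[X]) : R[X] :=
  X * p - C b * ((1 - X ^ 2) * derivative p)

theorem coeff_elephantStep_succ (b : R) (p : R[X]) (m : ℕ) :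
    (elephantStep b p).coeff (m + 1) =
      (1 + b * m) * p.coeff m - b * (m + 2) * p.coeff (m + 2) := by
  have hX2 : (X ^ 2 * derivative p).coeff (m + 1) = m * p.coeff m := by
    rw [coeff_X_pow_mul']
    cases m with
    | zero => simp
    | succ k => simp [coeff_derivative, mul_comm]
  simp only [elephantStep, coeff_sub, coeff_X_mul, coeff_C_mul, sub_mul, one_mul, hX2,
    coeff_derivative]
  push_cast
  ring

variable {b : R} {p : R[X]} {d : ℕ}

theorem natDegree_elephantStep_le (hp : p.natDegree ≤ d) :
    (elephantStep b p).natDegree ≤ d + 1 := by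
  rw [natDegree_le_iff_coeff_eq_zero]
  rintro (_ | m) hm
  · omega
  rw [coeff_elephantStep_succ, coeff_eq_zero_of_natDegree_lt (by omega : p.natDegree < m),
    coeff_eq_zero_of_natDegree_lt (by omega : p.natDegree < m + 2)]
  ring

theorem coeff_elephantStep_of_natDegree_le (hp : p.natDegree ≤ d) :
    (elephantStep b p).coeff (d + 1) = (1 + b * d) * p.coeff d := by
  rw [coeff_elephantStep_succ, coeff_eq_zero_of_natDegree_lt (by omega : p.natDegree < d + 2)]
  ring

end ElephantStep

theorem elephantR_add_two (a : ℝ) (n : ℕ) :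
    elephantR a (n + 2) = elephantStep (a / ((n : ℝ) + 1)) (elephantR a (n + 1)) :=
  rfl

theorem elephantR_neg_one_add_two (k : ℕ) :
    (elephantR (-1) (k + 2)).natDegree ≤ k ∧
      (elephantR (-1) (k + 2)).coeff k = 2 ^ k / (k + 1).factorial := by
  induction k with
  | zero =>
    have h : elephantR (-1) 2 = 1 := by
      rw [elephantR_add_two, elephantStep]
      simp only [elephantR, CharP.cast_eq_zero, zero_add, div_one, map_neg, map_one, derivative_X,
        mul_one, neg_mul, one_mul, neg_sub]
      ring
    simp [h]
  | succ k ih =>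
    obtain ⟨hdeg, hcoeff⟩ := ih
    rw [elephantR_add_two]
    refine ⟨natDegree_elephantStep_le hdeg, ?_⟩
    rw [coeff_elephantStep_of_natDegree_le hdeg, hcoeff, Nat.factorial_succ (k + 1)]
    push_cast
    field_simp
    ring

theorem stmt_6 (n : ℕ) (hn : 2 ≤ n) :
    (elephantR (-1) n).degree = (n - 2 : ℕ) ∧
    (elephantR (-1) n).leadingCoeff = 2 ^ (n - 2) / (n - 1).factorial := by
  obtain ⟨k, rfl⟩ : ∃ k, n = k + 2 := ⟨n - 2, by omega⟩
  obtain ⟨hdeg, hcoeff⟩ := elephantR_neg_one_add_two k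
  have hne : (elephantR (-1) (k + 2)).coeff k ≠ 0 := by
    rw [hcoeff]
    positivity
  have hnat := natDegree_eq_of_le_of_coeff_ne_zero hdeg hne
  refine ⟨degree_eq_of_le_of_coeff_ne_zero (degree_le_of_natDegree_le hdeg) hne, ?_⟩
  simpa [leadingCoeff, hnat] using hcoeff
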